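/- The cycle C_{3n+1} admits a (3n+1, n)-total colouring, and hence χ''_c(C_{3n+1}) ≤ 3 + 1/n for every positive integer n. -/

import Mathlib

open SimpleGraph

/-- A proper total colouring of `G` with `p` colours: vertex colours `cv`,
edge colours `ce` (symmetric on adjacent pairs); adjacent vertices, adjacent
edges and incident vertex-edge pairs get distinct colours. -/
def IsTotalColoring {V : Type*} (G : SimpleGraph V) (p : ℕ)
    (cv : V → Fin p) (ce : V → V → Fin p) : Prop :=
  (∀ u v, G.Adj u v → ce u v = ce v u) ∧
  (∀ u v, G.Adj u v → cv u ≠ cv v) ∧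
  (∀ u v w, G.Adj u v → G.Adj u w → v ≠ w → ce u v ≠ ce u w) ∧
  (∀ u v, G.Adj u v → ce u v ≠ cv u ∧ ce u v ≠ cv v)

/-- circular distance condition: `q ≤ |a - b| ≤ p - q`. -/
def circOk (p q a b : ℕ) : Prop :=
  q ≤ max a b - min a b ∧ max a b - min a b ≤ p - q

/-- A `(p,q)`-total colouring of `G`. -/
def IsCircTotalColoring {V : Type*} (G : SimpleGraph V) (p q : ℕ)
    (cv : V → ℕ) (ce : V → V → ℕ) : Prop :=
  (∀ v, cv v < p) ∧
  (∀ u v, G.Adj u v → ce u v < p) ∧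
  (∀ u v, G.Adj u v → ce u v = ce v u) ∧
  (∀ u v, G.Adj u v → circOk p q (cv u) (cv v)) ∧
  (∀ u v w, G.Adj u v → G.Adj u w → v ≠ w → circOk p q (ce u v) (ce u w)) ∧
  (∀ u v, G.Adj u v → circOk p q (ce u v) (cv u) ∧ circOk p q (ce u v) (cv v))

/-- The circular total chromatic number of `G`. -/
noncomputable def circTotalChromatic {V : Type*} (G : SimpleGraph V) : ℝ :=
  sInf {x : ℝ | ∃ p q : ℕ, 0 < q ∧
    (∃ cv ce, IsCircTotalColoring G p q cv ce) ∧ x = (p : ℝ) / q}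

/-- The chain graph `G_{k,n}`: `n` blocks, each a copy of `K_{k,k-1}` with
partite sets `Fin k` (the `X`-side) and `Fin (k-1)` (the `Y`-side); in block `i`
the designated link vertices are `x_i = (i, inl 0)` and `x'_i = (i, inl 1)`;
the extra vertex `u` is `none`, joined to `x'_1` and `x_n`, and `x_i` is joined
to `x'_{i+1}`. -/
def Gkn (k n : ℕ) : SimpleGraph (Option (Fin n × (Fin k ⊕ Fin (k - 1)))) :=
  SimpleGraph.fromRel (fun a b =>
    (∃ (i : Fin n) (x : Fin k) (y : Fin (k - 1)),
        a = some (i, Sum.inl x) ∧ b = some (i, Sum.inr y)) ∨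
    (∃ (i j : Fin n) (x x' : Fin k), (j : ℕ) = (i : ℕ) + 1 ∧ (x : ℕ) = 0 ∧ (x' : ℕ) = 1 ∧
        a = some (i, Sum.inl x) ∧ b = some (j, Sum.inl x')) ∨
    (∃ (i : Fin n) (x' : Fin k), (i : ℕ) = 0 ∧ (x' : ℕ) = 1 ∧
        a = none ∧ b = some (i, Sum.inl x')) ∨
    (∃ (i : Fin n) (x : Fin k), (i : ℕ) = n - 1 ∧ (x : ℕ) = 0 ∧
        a = some (i, Sum.inl x) ∧ b = none))

/-!
Write the vertices and edges of `C_p`, `p = 3n + 1`, as one cyclic sequence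
`v₀, e₀, v₁, e₁, …, v_{p-1}, e_{p-1}` and colour its `k`-th term by `k n mod p`.
Two elements that must receive distant colours (adjacent vertices, adjacent edges, or a
vertex and an incident edge) are one or two steps apart in this sequence, so their colours
differ by `n` or `2n` modulo `p`, and both lie in `[n, p - n] = [n, 2n + 1]`.
-/

lemma circOk_comm {p q a b : ℕ} : circOk p q a b ↔ circOk p q b a := by
  unfold circOk; rw [max_comm, min_comm]

/-- Residues `a, b < p` with `b ≡ a + d` are at distance `d` or `p - d`. -/
lemma circOk_of_modEq {p q a b d : ℕ} (ha : a < p) (hb : b < p) (hab : b ≡ a + d [MOD p])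
    (hqd : q ≤ d) (hdp : d ≤ p - q) : circOk p q a b := by
  have hb' : b = (a + d) % p := (Nat.mod_eq_of_lt hb).symm.trans hab
  unfold circOk
  rcases lt_or_ge (a + d) p with hlt | hge
  · rw [Nat.mod_eq_of_lt hlt] at hb'
    omega
  · rw [Nat.mod_eq_sub_mod hge, Nat.mod_eq_of_lt (by omega)] at hb'
    omega

lemma Fin.val_modEq_val_add_one_of_val_sub_eq_one {m : ℕ} {u v : Fin m} (h : (u - v).val = 1) :
    u.val ≡ v.val + 1 [MOD m] := by
  have : NeZero m := ⟨by rintro rfl; exact u.elim0⟩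
  calc u.val = ((u - v).val + v.val) % m := by rw [← Fin.val_add, sub_add_cancel]
    _ = (v.val + 1) % m := by rw [h, add_comm]
    _ ≡ v.val + 1 [MOD m] := Nat.mod_modEq _ _

lemma SimpleGraph.cycleGraph_adj_modEq {m : ℕ} {u v : Fin m} (h : (cycleGraph m).Adj u v) :
    v.val ≡ u.val + 1 [MOD m] ∨ u.val ≡ v.val + 1 [MOD m] := by
  rcases cycleGraph_adj'.mp h with h | h
  · exact .inr (Fin.val_modEq_val_add_one_of_val_sub_eq_one h)
  · exact .inl (Fin.val_modEq_val_add_one_of_val_sub_eq_one h)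

/-- The vertex `vᵢ` gets `stepColour p n (2 * i)` and the edge `vᵢvⱼ` gets
`stepColour p n (i + j)`; as `i + j ≡ 2 i + 1 [MOD p]` when `j ≡ i + 1`, this includes
the wrap-around edge. -/
def stepColour (p n k : ℕ) : ℕ := k * n % p

lemma stepColour_lt {p : ℕ} (hp : 0 < p) (n k : ℕ) : stepColour p n k < p :=
  Nat.mod_lt _ hp

lemma circOk_stepColour {p n a b k : ℕ} (hp : 0 < p) (hab : b ≡ a + k [MOD p]) (hk : 0 < k)
    (hkp : (k + 1) * n ≤ p) : circOk p n (stepColour p n a) (stepColour p n b) := by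
  refine circOk_of_modEq (d := k * n) (stepColour_lt hp n a) (stepColour_lt hp n b) ?_
    (Nat.le_mul_of_pos_left n hk) (by rw [add_mul, one_mul] at hkp; omega)
  calc b * n % p ≡ b * n [MOD p] := Nat.mod_modEq _ _
    _ ≡ (a + k) * n [MOD p] := hab.mul_right n
    _ = a * n + k * n := add_mul a k n
    _ ≡ a * n % p + k * n [MOD p] := (Nat.mod_modEq _ _).symm.add_right _

theorem isCircTotalColoring_cycleGraph_stepColour (n : ℕ) :
    IsCircTotalColoring (cycleGraph (3 * n + 1)) (3 * n + 1) n
      (fun i => stepColour (3 * n + 1) n (2 * i)) (fun i j => stepColour (3 * n + 1) n (i + j)) := by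
  set p := 3 * n + 1
  have hp : 0 < p := Nat.succ_pos _
  have step {a b : ℕ} (k : ℕ) (hk : k = 1 ∨ k = 2) (hab : (b : ZMod p) = a + k) :
      circOk p n (stepColour p n a) (stepColour p n b) :=
    circOk_stepColour hp ((ZMod.natCast_eq_natCast_iff _ _ _).mp (by push_cast; exact hab))
      (by omega) (by rcases hk with rfl | rfl <;> omega)
  have adj {u v : Fin p} (h : (cycleGraph p).Adj u v) :
      ((v : ℕ) : ZMod p) = (u : ℕ) + 1 ∨ ((u : ℕ) : ZMod p) = (v : ℕ) + 1 := by
    simpa only [← ZMod.natCast_eq_natCast_iff, Nat.cast_add, Nat.cast_one]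
      using cycleGraph_adj_modEq h
  have incidence {u v : Fin p} (h : ((v : ℕ) : ZMod p) = (u : ℕ) + 1) :
      circOk p n (stepColour p n (u + v)) (stepColour p n (2 * u)) ∧
        circOk p n (stepColour p n (u + v)) (stepColour p n (2 * v)) :=
    ⟨circOk_comm.mp (step 1 (by simp) (by push_cast; linear_combination h)),
      step 1 (by simp) (by push_cast; linear_combination h)⟩
  have eq_of_cast_eq {v w : Fin p} (h : ((v : ℕ) : ZMod p) = (w : ℕ)) : v = w :=
    Fin.ext (((ZMod.natCast_eq_natCast_iff _ _ _).mp h).eq_of_lt_of_lt v.isLt w.isLt)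
  refine ⟨fun _ => stepColour_lt hp _ _, fun _ _ _ => stepColour_lt hp _ _,
    fun _ _ _ => congrArg (stepColour p n) (add_comm _ _), ?vertices, ?edges, ?incidence⟩
  case vertices =>
    intro u v h
    rcases adj h with h | h
    · exact step 2 (by simp) (by push_cast; linear_combination 2 * h)
    · exact circOk_comm.mp (step 2 (by simp) (by push_cast; linear_combination 2 * h))
  case edges =>
    intro u v w hv hw hne
    rcases adj hv with hv | hv <;> rcases adj hw with hw | hw
    · exact absurd (eq_of_cast_eq (by linear_combination hv - hw)) hne
    · exact circOk_comm.mp (step 2 (by simp) (by push_cast; linear_combination hv + hw))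
    · exact step 2 (by simp) (by push_cast; linear_combination hv + hw)
    · exact absurd (eq_of_cast_eq (by linear_combination hw - hv)) hne
  case incidence =>
    intro u v h
    rcases adj h with h | h
    · exact incidence h
    · dsimp only
      rw [add_comm (u : ℕ)]
      exact (incidence h).symm

lemma circTotalChromatic_le {V : Type*} {G : SimpleGraph V} {p q : ℕ} {cv : V → ℕ}
    {ce : V → V → ℕ} (hq : 0 < q) (h : IsCircTotalColoring G p q cv ce) :
    circTotalChromatic G ≤ (p : ℝ) / q := by
  refine csInf_le ⟨0, ?_⟩ ⟨p, q, hq, ⟨cv, ce, h⟩, rfl⟩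
  rintro x ⟨p, q, -, -, rfl⟩
  positivity

theorem stmt16 (n : ℕ) (hn : 1 ≤ n) :
    (∃ cv ce, IsCircTotalColoring (cycleGraph (3 * n + 1)) (3 * n + 1) n cv ce) ∧
    circTotalChromatic (cycleGraph (3 * n + 1)) ≤ 3 + 1 / (n : ℝ) := by
  have hcol := isCircTotalColoring_cycleGraph_stepColour n
  refine ⟨⟨_, _, hcol⟩, (circTotalChromatic_le hn hcol).trans_eq ?_⟩
  have : (n : ℝ) ≠ 0 := by positivity
  field_simp
  push_cast
  ring
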